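/- arXiv:2505.08371 — 2 statements merged into one kernel-verified Lean document; each statement's English description precedes it below -/
import Mathlib

section
/- Let μ₁, μ₂ ∈ ℝ, β > 0, and α₁ > α₂ > 0. Then the ratio x ↦ φ(x; μ₁, α₁, β)/φ(x; μ₂, α₂, β) of generalized normal densities with common shape β tends to +∞ as x → +∞ and tends to +∞ as x → −∞. -/
open Filter

/-- The generalized normal density with location `μ`, scale `α`, and shape `β`. -/
noncomputable def gnpdf (μ α β x : ℝ) : ℝ :=
  β / (2 * α * Real.Gamma (1 / β)) * Real.exp (-((|x - μ| / α) ^ β))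

/-!
The ratio is `(α₂ / α₁) * exp E(x)` with `E(x) = (|x - μ₂| / α₂) ^ β - (|x - μ₁| / α₁) ^ β`.
Since `|x - μ₁| ≤ |x - μ₂| + |μ₁ - μ₂|`, it suffices that `(t / α₂) ^ β - ((t + d) / α₁) ^ β → ∞`
as `t → ∞`; this expression is `(t / α₂) ^ β * (1 - (α₂ / α₁) ^ β * (1 + d / t) ^ β)`, and the
second factor tends to `1 - (α₂ / α₁) ^ β > 0`. Both tails are handled at once through the
cocompact filter.
-/

open Topology

theorem gnpdf_div_gnpdf {β α₁ α₂ : ℝ} (μ₁ μ₂ x : ℝ) (hβ : 0 < β) (hα₁ : α₁ ≠ 0)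
    (hα₂ : α₂ ≠ 0) :
    gnpdf μ₁ α₁ β x / gnpdf μ₂ α₂ β x =
      α₂ / α₁ * Real.exp ((|x - μ₂| / α₂) ^ β - (|x - μ₁| / α₁) ^ β) := by
  have hΓ : Real.Gamma (1 / β) ≠ 0 := (Real.Gamma_pos_of_pos (by positivity)).ne'
  rw [gnpdf, gnpdf, Real.exp_sub, Real.exp_neg, Real.exp_neg]
  field_simp

theorem tendsto_div_rpow_sub_add_div_rpow_atTop {β α₁ α₂ : ℝ} (d : ℝ) (hβ : 0 < β)
    (hα₂ : 0 < α₂) (hα : α₂ < α₁) :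
    Tendsto (fun t : ℝ => (t / α₂) ^ β - ((t + d) / α₁) ^ β) atTop atTop := by
  have hα₁ : 0 < α₁ := hα₂.trans hα
  set c := (α₂ / α₁) ^ β
  have hc : c < 1 := Real.rpow_lt_one (by positivity) ((div_lt_one hα₁).2 hα) hβ
  have hshift : Tendsto (fun t : ℝ => 1 + d / t) atTop (𝓝 1) := by
    simpa using (tendsto_const_nhds (x := (1 : ℝ))).add
      (tendsto_const_nhds.div_atTop tendsto_id)
  have hfactor : ∀ᶠ t in atTop,
      (t / α₂) ^ β * (1 - c * (1 + d / t) ^ β) = (t / α₂) ^ β - ((t + d) / α₁) ^ β := by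
    filter_upwards [eventually_gt_atTop 0, hshift.eventually (lt_mem_nhds one_pos)]
      with t ht hshift_pos
    have : (t + d) / α₁ = t / α₂ * (α₂ / α₁) * (1 + d / t) := by field_simp
    rw [this, Real.mul_rpow (by positivity) hshift_pos.le, Real.mul_rpow (by positivity)
      (by positivity)]
    ring
  refine (((tendsto_rpow_atTop hβ).comp (tendsto_id.atTop_div_const hα₂)).atTop_mul_pos
    (sub_pos.2 hc) ?_).congr' hfactor
  simpa using (hshift.rpow_const (Or.inr hβ.le)).const_mul c |>.const_sub 1

theorem rpow_abs_sub_div_le {α β : ℝ} (μ₁ μ₂ x : ℝ) (hα : 0 < α) (hβ : 0 ≤ β) :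
    (|x - μ₁| / α) ^ β ≤ ((|x - μ₂| + |μ₁ - μ₂|) / α) ^ β := by
  gcongr
  simpa only [abs_sub_comm μ₁ μ₂] using abs_sub_le x μ₂ μ₁

theorem tendsto_gnpdf_exponent_sub_cocompact {β α₁ α₂ : ℝ} (μ₁ μ₂ : ℝ) (hβ : 0 < β)
    (hα₂ : 0 < α₂) (hα : α₂ < α₁) :
    Tendsto (fun x => (|x - μ₂| / α₂) ^ β - (|x - μ₁| / α₁) ^ β) (cocompact ℝ) atTop := by
  have hdist : Tendsto (fun x : ℝ => |x - μ₂|) (cocompact ℝ) atTop := by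
    simpa only [Real.dist_eq] using tendsto_dist_right_cocompact_atTop μ₂
  exact tendsto_atTop_mono
    (fun x => sub_le_sub_left (rpow_abs_sub_div_le μ₁ μ₂ x (hα₂.trans hα) hβ.le) _)
    ((tendsto_div_rpow_sub_add_div_rpow_atTop |μ₁ - μ₂| hβ hα₂ hα).comp hdist)

/-- With common shape `β > 0` and scales `α₁ > α₂ > 0`, the ratio
`x ↦ φ(x; μ₁, α₁, β) / φ(x; μ₂, α₂, β)` tends to `+∞` in both tails. -/
theorem gnpdf_ratio_tendsto_atTop_of_scale_gt
    (μ₁ μ₂ β α₁ α₂ : ℝ) (hβ : 0 < β) (hα₂ : 0 < α₂) (hα : α₂ < α₁) :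
    Tendsto (fun x => gnpdf μ₁ α₁ β x / gnpdf μ₂ α₂ β x) atTop atTop ∧
    Tendsto (fun x => gnpdf μ₁ α₁ β x / gnpdf μ₂ α₂ β x) atBot atTop := by
  have hα₁ : 0 < α₁ := hα₂.trans hα
  have h : Tendsto (fun x => gnpdf μ₁ α₁ β x / gnpdf μ₂ α₂ β x) (cocompact ℝ) atTop := by
    simp_rw [gnpdf_div_gnpdf _ _ _ hβ hα₁.ne' hα₂.ne']
    exact (Real.tendsto_exp_atTop.comp
      (tendsto_gnpdf_exponent_sub_cocompact μ₁ μ₂ hβ hα₂ hα)).const_mul_atTop (by positivity)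
  exact ⟨h.mono_left atTop_le_cocompact, h.mono_left atBot_le_cocompact⟩
end

section
/- Let f and g be finite mixtures of generalized normal densities with all weights, scales, and shapes strictly positive. Let β_f = min component shape of f and α_f = max of the scales of components of f whose shape equals β_f; define β_g and α_g analogously for g. If β_f ≠ β_g, or if β_f = β_g and α_f ≠ α_g, then the ratio r(x) = f(x)/g(x) is non-monotonic: there exist points x₀ < x₁ < x₂ such that (r(x₀) − r(x₁)) · (r(x₁) − r(x₂)) < 0. -/
open Filter Real Topology Finset

def NonMonotonic (r : ℝ → ℝ) : Prop :=
  ∃ x₀ x₁ x₂ : ℝ, x₀ < x₁ ∧ x₁ < x₂ ∧ (r x₀ - r x₁) * (r x₁ - r x₂) < 0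

namespace NonMonotonic

theorem of_tendsto_atTop {r : ℝ → ℝ} (hbot : Tendsto r atBot atTop)
    (htop : Tendsto r atTop atTop) : NonMonotonic r := by
  obtain ⟨x₀, hx₀, hr₀⟩ := ((eventually_lt_atBot 0).and (hbot.eventually_gt_atTop (r 0))).exists
  obtain ⟨x₂, hx₂, hr₂⟩ := ((eventually_gt_atTop 0).and (htop.eventually_gt_atTop (r 0))).exists
  exact ⟨x₀, 0, x₂, hx₀, hx₂, mul_neg_of_pos_of_neg (by linarith) (by linarith)⟩

theorem of_inv {r : ℝ → ℝ} (hr : ∀ x, 0 < r x) (h : NonMonotonic fun x => (r x)⁻¹) :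
    NonMonotonic r := by
  obtain ⟨x₀, x₁, x₂, h₀₁, h₁₂, hneg⟩ := h
  refine ⟨x₀, x₁, x₂, h₀₁, h₁₂, ?_⟩
  have h₀ := hr x₀; have h₁ := hr x₁; have h₂ := hr x₂
  have hprod : ((r x₀)⁻¹ - (r x₁)⁻¹) * ((r x₁)⁻¹ - (r x₂)⁻¹) * (r x₀ * r x₁ ^ 2 * r x₂) =
      (r x₀ - r x₁) * (r x₁ - r x₂) := by
    field_simp
    ring
  rw [← hprod]
  exact mul_neg_of_neg_of_pos hneg (by positivity)

end NonMonotonic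

noncomputable def gnConst (α β : ℝ) : ℝ := β / (2 * α * Gamma (1 / β))

noncomputable def gnExponent (μ α β x : ℝ) : ℝ := (|x - μ| / α) ^ β

theorem gnpdf_eq (μ α β x : ℝ) : gnpdf μ α β x = gnConst α β * exp (-gnExponent μ α β x) := rfl

theorem gnpdf_pos {μ α β : ℝ} (hα : 0 < α) (hβ : 0 < β) (x : ℝ) : 0 < gnpdf μ α β x := by
  have := Gamma_pos_of_pos (one_div_pos.2 hβ)
  rw [gnpdf]
  positivity

theorem gnpdf_neg (μ α β x : ℝ) : gnpdf μ α β (-x) = gnpdf (-μ) α β x := by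
  rw [gnpdf, gnpdf, ← abs_neg]
  ring_nf

theorem gnExponent_eventuallyEq {α : ℝ} (μ β : ℝ) (hα : 0 ≤ α) :
    gnExponent μ α β =ᶠ[atTop] fun x => x ^ β * (|1 - μ / x| / α) ^ β := by
  filter_upwards [eventually_gt_atTop 0] with x hx
  have : |x - μ| = x * |1 - μ / x| := by
    rw [← abs_of_pos hx, ← abs_mul, abs_of_pos hx, mul_sub, mul_one, mul_div_cancel₀ _ hx.ne']
  rw [gnExponent, this, mul_div_assoc, mul_rpow hx.le (by positivity)]

theorem tendsto_gnExponent_factor {α : ℝ} (μ β : ℝ) (hα : α ≠ 0) :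
    Tendsto (fun x => (|1 - μ / x| / α) ^ β) atTop (𝓝 (α⁻¹ ^ β)) := by
  have h : Tendsto (fun x => |1 - μ / x| / α) atTop (𝓝 (|1 - 0| / α)) :=
    ((tendsto_const_nhds.sub (tendsto_const_nhds.div_atTop tendsto_id)).abs).div_const α
  rw [sub_zero, abs_one, one_div] at h
  exact h.rpow_const (Or.inl (inv_ne_zero hα))

theorem tendsto_rpow_mul_sub_rpow_mul_atTop_atTop {β β' c c' : ℝ} {h h' : ℝ → ℝ} (hβ : 0 < β)
    (hββ' : β < β') (hh : Tendsto h atTop (𝓝 c)) (hh' : Tendsto h' atTop (𝓝 c')) (hc' : 0 < c') :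
    Tendsto (fun x => x ^ β' * h' x - x ^ β * h x) atTop atTop := by
  have hdom : Tendsto (fun x => x ^ (β' - β) * h' x - h x) atTop atTop :=
    ((tendsto_rpow_atTop (sub_pos.2 hββ')).atTop_mul_pos hc' hh').atTop_add hh.neg
  refine ((tendsto_rpow_atTop hβ).atTop_mul_atTop₀ hdom).congr' ?_
  filter_upwards [eventually_gt_atTop 0] with x hx
  rw [mul_sub, ← mul_assoc, ← rpow_add hx, add_sub_cancel]

/-- A smaller key means a heavier tail: a smaller shape, or the same shape and a larger scale. -/
def tailKey (α β : ℝ) : ℝ ×ₗ ℝᵒᵈ := toLex (β, OrderDual.toDual α)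

theorem tailKey_lt_tailKey {α β α' β' : ℝ} :
    tailKey α β < tailKey α' β' ↔ β < β' ∨ β = β' ∧ α' < α := by
  simp [tailKey, Prod.Lex.toLex_lt_toLex]

theorem tailKey_le_tailKey {α β α' β' : ℝ} :
    tailKey α β ≤ tailKey α' β' ↔ β < β' ∨ β = β' ∧ α' ≤ α := by
  simp [tailKey, Prod.Lex.toLex_le_toLex]

theorem tailKey_inj {α β α' β' : ℝ} : tailKey α β = tailKey α' β' ↔ α = α' ∧ β = β' := by
  simp [tailKey, and_comm]

theorem tendsto_gnExponent_sub_atTop_atTop {μ α β μ' α' β' : ℝ} (hα : 0 < α) (hα' : 0 < α')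
    (hβ : 0 < β) (h : tailKey α β < tailKey α' β') :
    Tendsto (fun x => gnExponent μ' α' β' x - gnExponent μ α β x) atTop atTop := by
  refine Tendsto.congr' ((gnExponent_eventuallyEq μ' β' hα'.le).sub
    (gnExponent_eventuallyEq μ β hα.le)).symm ?_
  have hlim := tendsto_gnExponent_factor μ β hα.ne'
  have hlim' := tendsto_gnExponent_factor μ' β' hα'.ne'
  rcases tailKey_lt_tailKey.1 h with hββ' | ⟨rfl, hα'α⟩
  · exact tendsto_rpow_mul_sub_rpow_mul_atTop_atTop hβ hββ' hlim hlim' (by positivity)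
  · have hc : α⁻¹ ^ β < α'⁻¹ ^ β :=
      rpow_lt_rpow (by positivity) ((inv_lt_inv₀ hα hα').2 hα'α) hβ
    refine ((tendsto_rpow_atTop hβ).atTop_mul_pos (sub_pos.2 hc) (hlim'.sub hlim)).congr
      fun x => ?_
    simp only [Pi.sub_apply, mul_sub]

theorem tendsto_gnpdf_div_gnpdf_atTop_nhds_zero {μ α β μ' α' β' : ℝ} (hα : 0 < α) (hα' : 0 < α')
    (hβ : 0 < β) (h : tailKey α β < tailKey α' β') :
    Tendsto (fun x => gnpdf μ' α' β' x / gnpdf μ α β x) atTop (𝓝 0) := by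
  have hexp := tendsto_exp_atBot.comp <| tendsto_neg_atTop_atBot.comp <|
    tendsto_gnExponent_sub_atTop_atTop (μ := μ) (μ' := μ') hα hα' hβ h
  refine (mul_zero (gnConst α' β' / gnConst α β) ▸ hexp.const_mul _).congr fun x => ?_
  simp only [Function.comp_apply, gnpdf_eq, mul_div_mul_comm, ← exp_sub]
  ring_nf

theorem isLeast_tailKey {ι : Type*} [Fintype ι] [Nonempty ι] (α β : ι → ℝ) {βmin αmax : ℝ}
    (hβmin : βmin = univ.inf' univ_nonempty β) (hne : (univ.filter fun j => β j = βmin).Nonempty)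
    (hαmax : αmax = (univ.filter fun j => β j = βmin).sup' hne α) :
    IsLeast (Set.range fun i => tailKey (α i) (β i)) (tailKey αmax βmin) := by
  obtain ⟨j, hj, hαj⟩ := exists_mem_eq_sup' hne α
  refine ⟨⟨j, by simp only [(mem_filter.1 hj).2, hαmax, hαj]⟩, ?_⟩
  rintro _ ⟨i, rfl⟩
  rcases (hβmin ▸ inf'_le β (mem_univ i) : βmin ≤ β i).lt_or_eq with hlt | heq
  · exact tailKey_le_tailKey.2 (Or.inl hlt)
  · refine tailKey_le_tailKey.2 (Or.inr ⟨heq, ?_⟩)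
    exact hαmax ▸ le_sup' α (mem_filter.2 ⟨mem_univ i, heq.symm⟩)

section Mixture

variable {ι κ : Type*} [Fintype ι] [Fintype κ]

noncomputable def gnMixture (ω μ α β : ι → ℝ) (x : ℝ) : ℝ :=
  ∑ i, ω i * gnpdf (μ i) (α i) (β i) x

theorem gnMixture_pos [Nonempty ι] {ω μ α β : ι → ℝ} (hω : ∀ i, 0 < ω i) (hα : ∀ i, 0 < α i)
    (hβ : ∀ i, 0 < β i) (x : ℝ) : 0 < gnMixture ω μ α β x :=
  sum_pos (fun i _ => mul_pos (hω i) (gnpdf_pos (hα i) (hβ i) x)) univ_nonempty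

theorem gnMixture_neg (ω μ α β : ι → ℝ) (x : ℝ) :
    gnMixture ω μ α β (-x) = gnMixture ω (-μ) α β x := by
  simp only [gnMixture, gnpdf_neg, Pi.neg_apply]

variable {ωf μf αf βf : ι → ℝ} {ωg μg αg βg : κ → ℝ}

theorem tendsto_gnMixture_div_gnMixture_atTop_atTop [Nonempty κ] (hωf : ∀ i, 0 < ωf i)
    (hαf : ∀ i, 0 < αf i) (hβf : ∀ i, 0 < βf i) (hωg : ∀ k, 0 < ωg k) (hαg : ∀ k, 0 < αg k)
    (hβg : ∀ k, 0 < βg k) (j : ι) (hj : ∀ k, tailKey (αf j) (βf j) < tailKey (αg k) (βg k)) :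
    Tendsto (fun x => gnMixture ωf μf αf βf x / gnMixture ωg μg αg βg x) atTop atTop := by
  set φ : ℝ → ℝ := fun x => ωf j * gnpdf (μf j) (αf j) (βf j) x
  have hφ : ∀ x, 0 < φ x := fun x => mul_pos (hωf j) (gnpdf_pos (hαf j) (hβf j) x)
  have hg : ∀ x, 0 < gnMixture ωg μg αg βg x := gnMixture_pos hωg hαg hβg
  have hsmall : Tendsto (fun x => gnMixture ωg μg αg βg x / φ x) atTop (𝓝[>] 0) := by
    have := tendsto_finsetSum univ fun k _ =>
      (tendsto_gnpdf_div_gnpdf_atTop_nhds_zero (μ := μf j) (μ' := μg k) (hαf j) (hαg k) (hβf j)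
        (hj k)).const_mul (ωg k / ωf j)
    simp only [mul_zero, sum_const_zero] at this
    refine tendsto_nhdsWithin_of_tendsto_nhds_of_eventually_within _ (this.congr fun x => ?_)
      (Eventually.of_forall fun x => div_pos (hg x) (hφ x))
    rw [gnMixture, sum_div]
    exact sum_congr rfl fun k _ => by rw [div_mul_div_comm]
  refine tendsto_atTop_mono (fun x => ?_) hsmall.inv_tendsto_nhdsGT_zero
  rw [Pi.inv_apply, inv_div]
  refine div_le_div_of_nonneg_right ?_ (hg x).le
  exact single_le_sum (f := fun i => ωf i * gnpdf (μf i) (αf i) (βf i) x)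
    (fun i _ => (mul_pos (hωf i) (gnpdf_pos (hαf i) (hβf i) x)).le) (mem_univ j)

theorem nonMonotonic_gnMixture_div_gnMixture [Nonempty κ] (hωf : ∀ i, 0 < ωf i)
    (hαf : ∀ i, 0 < αf i) (hβf : ∀ i, 0 < βf i) (hωg : ∀ k, 0 < ωg k) (hαg : ∀ k, 0 < αg k)
    (hβg : ∀ k, 0 < βg k) (j : ι) (hj : ∀ k, tailKey (αf j) (βf j) < tailKey (αg k) (βg k)) :
    NonMonotonic fun x => gnMixture ωf μf αf βf x / gnMixture ωg μg αg βg x := by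
  refine .of_tendsto_atTop ?_
    (tendsto_gnMixture_div_gnMixture_atTop_atTop hωf hαf hβf hωg hαg hβg j hj)
  rw [← tendsto_comp_neg_atTop_iff]
  simpa only [gnMixture_neg] using
    tendsto_gnMixture_div_gnMixture_atTop_atTop (μf := -μf) (μg := -μg) hωf hαf hβf hωg hαg hβg j hj

end Mixture

theorem mixture_ratio_nonMonotonic_of_tail_mismatch_general
    (Lf Lg : ℕ)
    (ωf μf αf βf : Fin (Lf + 1) → ℝ) (ωg μg αg βg : Fin (Lg + 1) → ℝ)
    (hωf : ∀ j, 0 < ωf j) (hαf : ∀ j, 0 < αf j) (hβf : ∀ j, 0 < βf j)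
    (hωg : ∀ k, 0 < ωg k) (hαg : ∀ k, 0 < αg k) (hβg : ∀ k, 0 < βg k)
    (βfmin βgmin αfmax αgmax : ℝ)
    (hβfmin : βfmin = Finset.univ.inf' Finset.univ_nonempty βf)
    (hβgmin : βgmin = Finset.univ.inf' Finset.univ_nonempty βg)
    (hnef : (Finset.univ.filter fun j => βf j = βfmin).Nonempty)
    (hneg : (Finset.univ.filter fun k => βg k = βgmin).Nonempty)
    (hαfmax : αfmax = (Finset.univ.filter fun j => βf j = βfmin).sup' hnef αf)
    (hαgmax : αgmax = (Finset.univ.filter fun k => βg k = βgmin).sup' hneg αg)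
    (hne : βfmin ≠ βgmin ∨ (βfmin = βgmin ∧ αfmax ≠ αgmax))
    (r : ℝ → ℝ)
    (hr : ∀ x, r x = (∑ j, ωf j * gnpdf (μf j) (αf j) (βf j) x)
                   / (∑ k, ωg k * gnpdf (μg k) (αg k) (βg k) x)) :
    ∃ x₀ x₁ x₂ : ℝ, x₀ < x₁ ∧ x₁ < x₂ ∧ (r x₀ - r x₁) * (r x₁ - r x₂) < 0 := by
  have hf := isLeast_tailKey αf βf hβfmin hnef hαfmax
  have hg := isLeast_tailKey αg βg hβgmin hneg hαgmax
  have hkey : tailKey αfmax βfmin ≠ tailKey αgmax βgmin := by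
    rw [Ne, tailKey_inj]
    tauto
  obtain rfl : r = fun x => gnMixture ωf μf αf βf x / gnMixture ωg μg αg βg x := funext hr
  rcases hkey.lt_or_gt with hlt | hlt
  · obtain ⟨⟨j, hj⟩, -⟩ := hf
    exact nonMonotonic_gnMixture_div_gnMixture hωf hαf hβf hωg hαg hβg j
      fun k => hj.trans_lt (hlt.trans_le (hg.2 ⟨k, rfl⟩))
  · obtain ⟨⟨k, hk⟩, -⟩ := hg
    refine NonMonotonic.of_inv (fun x => div_pos (gnMixture_pos hωf hαf hβf x)
      (gnMixture_pos hωg hαg hβg x)) ?_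
    simpa only [inv_div] using nonMonotonic_gnMixture_div_gnMixture hωg hαg hβg hωf hαf hβf k
      fun j => hk.trans_lt (hlt.trans_le (hf.2 ⟨j, rfl⟩))

/-- Step 1 of Lemma 2: Let `f`, `g` be finite mixtures of generalized
normal densities with strictly positive weights, scales and shapes (weights summing
to 1). Let `βfmin` be the minimal component shape of `f` and `αfmax` the maximal
scale among the components of `f` whose shape equals `βfmin` (and analogously
`βgmin`, `αgmax` for `g`). If the tail-dominant components differ in shape
(`βfmin ≠ βgmin`) or have equal shape but different scales
(`βfmin = βgmin ∧ αfmax ≠ αgmax`), then the density ratio `r = f/g` is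
non-monotonic. -/
theorem mixture_ratio_nonMonotonic_of_tail_mismatch
    (Lf Lg : ℕ)
    (ωf μf αf βf : Fin (Lf + 1) → ℝ) (ωg μg αg βg : Fin (Lg + 1) → ℝ)
    (hωf : ∀ j, 0 < ωf j) (hαf : ∀ j, 0 < αf j) (hβf : ∀ j, 0 < βf j)
    (hωg : ∀ k, 0 < ωg k) (hαg : ∀ k, 0 < αg k) (hβg : ∀ k, 0 < βg k)
    (hsumf : ∑ j, ωf j = 1) (hsumg : ∑ k, ωg k = 1)
    (βfmin βgmin αfmax αgmax : ℝ)
    (hβfmin : βfmin = Finset.univ.inf' Finset.univ_nonempty βf)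
    (hβgmin : βgmin = Finset.univ.inf' Finset.univ_nonempty βg)
    (hnef : (Finset.univ.filter fun j => βf j = βfmin).Nonempty)
    (hneg : (Finset.univ.filter fun k => βg k = βgmin).Nonempty)
    (hαfmax : αfmax = (Finset.univ.filter fun j => βf j = βfmin).sup' hnef αf)
    (hαgmax : αgmax = (Finset.univ.filter fun k => βg k = βgmin).sup' hneg αg)
    (hne : βfmin ≠ βgmin ∨ (βfmin = βgmin ∧ αfmax ≠ αgmax))
    (r : ℝ → ℝ)
    (hr : ∀ x, r x = (∑ j, ωf j * gnpdf (μf j) (αf j) (βf j) x)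
                   / (∑ k, ωg k * gnpdf (μg k) (αg k) (βg k) x)) :
    ∃ x₀ x₁ x₂ : ℝ, x₀ < x₁ ∧ x₁ < x₂ ∧ (r x₀ - r x₁) * (r x₁ - r x₂) < 0 :=
  mixture_ratio_nonMonotonic_of_tail_mismatch_general Lf Lg ωf μf αf βf ωg μg αg βg hωf hαf hβf hωg
    hαg hβg βfmin βgmin αfmax αgmax hβfmin hβgmin hnef hneg hαfmax hαgmax hne r hr
end
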